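/- arXiv:1604.05084 — 3 statements merged into one kernel-verified Lean document; each statement's English description precedes it below -/
import Mathlib

section
/- Let 1 ≤ m ≤ n, let i, j ∈ [n] with i ≠ j, write T = T_{ij}, and let S be a family of m-element subsets of [n], viewed as vertices of the Johnson graph J(n,m). Then |T(S)| = |S|, |B(T(S))| ≤ |B(S)|, and |∂(T(S))| ≤ |∂S|, where B and ∂ denote the ball and boundary in J(n,m). -/
open Finset

/-- The set of vertices of the Johnson graph `J(n,m)`: the `m`-element subsets of
`[n] = {0, …, n-1}`. -/
def johnsonVerts (n m : ℕ) : Finset (Finset ℕ) :=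
  (Finset.range n).powersetCard m

/-- The (vertex) boundary of a set `S` of vertices in the Johnson graph `J(n,m)`:
the vertices outside `S` whose symmetric difference with some member of `S` has
cardinality `2`. -/
def boundary (n m : ℕ) (S : Finset (Finset ℕ)) : Finset (Finset ℕ) :=
  (johnsonVerts n m).filter fun y => y ∉ S ∧ ∃ x ∈ S, (symmDiff x y).card = 2

/-- The ball of a set `S` of vertices in the Johnson graph `J(n,m)`. -/
def ball (n m : ℕ) (S : Finset (Finset ℕ)) : Finset (Finset ℕ) :=
  S ∪ boundary n m S

/-- The initial segment of length `k` in the colex order on `m`-element subsets of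
`[n]`: the `m`-subsets `s` such that fewer than `k` of the `m`-subsets are
colex-smaller than `s`. -/
def colexInitSeg (n m k : ℕ) : Finset (Finset ℕ) :=
  (johnsonVerts n m).filter fun s =>
    ((johnsonVerts n m).filter fun t =>
      toColex t < toColex s).card < k

/-- The isoperimetric function `μ_{n,m}(k)` of the Johnson graph `J(n,m)`:
the smallest boundary cardinality among sets of `k` vertices. -/
noncomputable def mu (n m k : ℕ) : ℕ :=
  sInf {b | ∃ S : Finset (Finset ℕ),
    S ⊆ johnsonVerts n m ∧ S.card = k ∧ (boundary n m S).card = b}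

/-- The lower shadow of a family `S` of `m`-element subsets of `[n]`:
the `(m-1)`-subsets contained in some member of `S`. -/
def lowShadow (n m : ℕ) (S : Finset (Finset ℕ)) : Finset (Finset ℕ) :=
  ((Finset.range n).powersetCard (m - 1)).filter fun t => ∃ s ∈ S, t ⊆ s

/-- The upper shadow of a family `S` of `c`-element subsets of `[n]`:
the `(c+1)`-subsets of `[n]` containing some member of `S`. -/
def upShadow' (n c : ℕ) (S : Finset (Finset ℕ)) : Finset (Finset ℕ) :=
  ((Finset.range n).powersetCard (c + 1)).filter fun t => ∃ s ∈ S, s ⊆ t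

/-- The shift `T_{ij}` applied to a single set `x` of the family `S`. -/
def shiftFun (i j : ℕ) (S : Finset (Finset ℕ)) (x : Finset ℕ) : Finset ℕ :=
  if i ∈ x ∧ j ∉ x ∧ insert j (x.erase i) ∉ S then insert j (x.erase i) else x

/-- The shift `T_{ij}(S)` of a family `S`. -/
def shift (i j : ℕ) (S : Finset (Finset ℕ)) : Finset (Finset ℕ) :=
  S.image (shiftFun i j S)

/-- `ks 0 > ks 1 > ⋯ > ks r ≥ m - r > 0` and `k = ∑_{i=0}^{r} C(ks i, m - i)`:
the `m`-binomial representation of `k`. -/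
def IsMBinomialRep (m k r : ℕ) (ks : ℕ → ℕ) : Prop :=
  (∀ i < r, ks (i + 1) < ks i) ∧ m - r ≤ ks r ∧ r < m ∧
    k = ∑ i ∈ Finset.range (r + 1), (ks i).choose (m - i)

/-- The function `f(k,n,m)` computed from the `m`-binomial representation
`k = ∑_{i=0}^{r} C(ks i, m - i)`:
`f = C(ks 0, m-1)·(n - ks 0) + ∑_{i=1}^{r} (C(ks i, m-i-1)·(n - ks 0 - 1) - C(ks i, m-i))`. -/
def fVal (n m r : ℕ) (ks : ℕ → ℕ) : ℤ :=
  ((ks 0).choose (m - 1) : ℤ) * ((n : ℤ) - ks 0) +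
    ∑ i ∈ Finset.Icc 1 r,
      (((ks i).choose (m - i - 1) : ℤ) * ((n : ℤ) - ks 0 - 1) - ((ks i).choose (m - i) : ℤ))

/-- The generalized binomial coefficient `C(x, j) = x(x-1)⋯(x-j+1)/j!` for an
integer `x` (the division is exact). -/
def genChoose (x : ℤ) (j : ℕ) : ℤ :=
  (∏ i ∈ Finset.range j, (x - i)) / (j.factorial : ℤ)

/-!
Let `τ` be the transposition of `i` and `j` acting on sets; for `i, j < n` it is an automorphism
of `J(n,m)`. The shift is described by: `y ∈ T(A)` iff `y, τ y ∈ A` when `i ∈ y`, and `y ∈ A` or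
`τ y ∈ A` when `i ∉ y`. This gives `B(T(S)) ⊆ T(B(S))`: as `T(S) ⊆ S ∪ τ S`, every `y ∈ B(T(S))`
has `y` or `τ y` in `B(S)`; and if `i ∈ y`, `j ∉ y`, a neighbour `z ∈ T(S)` of `y` either has
`z, τ z ∈ S` or is `τ y`, which is adjacent to `y` with one of the two in `S`. Hence
`|B(T(S))| ≤ |T(B(S))| = |B(S)|`, and the boundary bound follows from `B = S ⊔ ∂S` and
`|T(S)| = |S|`.
-/

section Swap

variable (i j : ℕ)

def swapSet (x : Finset ℕ) : Finset ℕ :=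
  x.map (Equiv.swap i j).toEmbedding

variable {i j}

@[simp]
theorem mem_swapSet {x : Finset ℕ} {a : ℕ} : a ∈ swapSet i j x ↔ Equiv.swap i j a ∈ x := by
  simp [swapSet, Finset.mem_map_equiv]

@[simp]
theorem swapSet_swapSet (x : Finset ℕ) : swapSet i j (swapSet i j x) = x := by
  ext a; simp

theorem swapSet_injective : Function.Injective (swapSet i j) :=
  Function.LeftInverse.injective swapSet_swapSet

theorem swapSet_eq_self {x : Finset ℕ} (h : i ∈ x ↔ j ∈ x) : swapSet i j x = x := by
  ext a
  rw [mem_swapSet]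
  rcases eq_or_ne a i with rfl | hai
  · simp [h]
  rcases eq_or_ne a j with rfl | haj
  · simp [h]
  · rw [Equiv.swap_apply_of_ne_of_ne hai haj]

theorem swapSet_eq_insert_erase {x : Finset ℕ} (hi : i ∈ x) (hj : j ∉ x) :
    swapSet i j x = insert j (x.erase i) := by
  have hij : i ≠ j := by rintro rfl; exact hj hi
  ext a
  rw [mem_swapSet, mem_insert, mem_erase]
  rcases eq_or_ne a i with rfl | hai
  · simp [hij, hj]
  rcases eq_or_ne a j with rfl | haj
  · simp [hi]
  · simp [Equiv.swap_apply_of_ne_of_ne hai haj, hai, haj]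

theorem symmDiff_swapSet (x y : Finset ℕ) :
    symmDiff (swapSet i j x) (swapSet i j y) = swapSet i j (symmDiff x y) := by
  simp only [swapSet, map_eq_image]
  exact (image_symmDiff x y (Equiv.injective _)).symm

theorem card_swapSet (x : Finset ℕ) : (swapSet i j x).card = x.card :=
  card_map _

theorem card_symmDiff_swapSet (x y : Finset ℕ) :
    (symmDiff (swapSet i j x) (swapSet i j y)).card = (symmDiff x y).card := by
  rw [symmDiff_swapSet, card_swapSet]

theorem card_symmDiff_swapSet_self {y : Finset ℕ} (hi : i ∈ y) (hj : j ∉ y) :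
    (symmDiff y (swapSet i j y)).card = 2 := by
  have hij : i ≠ j := by rintro rfl; exact hj hi
  have : symmDiff y (swapSet i j y) = {i, j} := by
    rw [swapSet_eq_insert_erase hi hj]
    ext a
    rcases eq_or_ne a i with rfl | hai
    · simp [mem_symmDiff, hi, hij]
    rcases eq_or_ne a j with rfl | haj
    · simp [mem_symmDiff, hj]
    · simp [mem_symmDiff, hai, haj]
  rw [this, card_pair hij]

theorem eq_swapSet_of_card_symmDiff_eq_two {y z : Finset ℕ} (hiy : i ∈ y) (hjy : j ∉ y)
    (hiz : i ∉ z) (hjz : j ∈ z) (hyz : (symmDiff y z).card = 2) : z = swapSet i j y := by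
  have hij : i ≠ j := by rintro rfl; exact hjy hiy
  have hpair : {i, j} = symmDiff y z := by
    refine eq_of_subset_of_card_le (fun a ha => ?_) (by rw [hyz, card_pair hij])
    rcases mem_insert.1 ha with rfl | ha
    · exact mem_symmDiff.2 (Or.inl ⟨hiy, hiz⟩)
    · rw [mem_singleton.1 ha]; exact mem_symmDiff.2 (Or.inr ⟨hjz, hjy⟩)
  ext a
  rw [mem_swapSet]
  rcases eq_or_ne a i with rfl | hai
  · simp [hiz, hjy]
  rcases eq_or_ne a j with rfl | haj
  · simp [hjz, hiy]
  · have : a ∉ symmDiff y z := by rw [← hpair]; simp [hai, haj]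
    rw [Equiv.swap_apply_of_ne_of_ne hai haj]
    by_contra h
    exact this (by simp only [mem_symmDiff]; tauto)

theorem swapSet_mem_johnsonVerts {n m : ℕ} (hi : i < n) (hj : j < n) {y : Finset ℕ}
    (hy : y ∈ johnsonVerts n m) : swapSet i j y ∈ johnsonVerts n m := by
  rw [johnsonVerts, mem_powersetCard] at hy ⊢
  refine ⟨fun a ha => ?_, by rw [card_swapSet, hy.2]⟩
  rw [mem_swapSet] at ha
  have hlt := mem_range.1 (hy.1 ha)
  rcases eq_or_ne a i with rfl | hai
  · exact mem_range.2 hi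
  rcases eq_or_ne a j with rfl | haj
  · exact mem_range.2 hj
  · rw [Equiv.swap_apply_of_ne_of_ne hai haj] at hlt
    exact mem_range.2 hlt

end Swap

section Shift

variable {i j : ℕ} {S : Finset (Finset ℕ)}

theorem shiftFun_eq_ite (x : Finset ℕ) :
    shiftFun i j S x = if i ∈ x ∧ j ∉ x ∧ swapSet i j x ∉ S then swapSet i j x else x := by
  by_cases h : i ∈ x ∧ j ∉ x
  · simp only [shiftFun, h, swapSet_eq_insert_erase h.1 h.2, true_and]
  · rw [shiftFun, if_neg (fun h' => h ⟨h'.1, h'.2.1⟩), if_neg (fun h' => h ⟨h'.1, h'.2.1⟩)]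

variable (i j S) in
theorem card_shift : (shift i j S).card = S.card := by
  refine card_image_of_injOn fun x hx y hy hxy => ?_
  simp only [shiftFun_eq_ite] at hxy
  split_ifs at hxy with hx' hy' hy'
  · exact swapSet_injective hxy
  · exact absurd (hxy ▸ hy) hx'.2.2
  · exact absurd (hxy ▸ hx) hy'.2.2
  · exact hxy

theorem mem_shift {y : Finset ℕ} :
    y ∈ shift i j S ↔
      (i ∈ y → y ∈ S ∧ swapSet i j y ∈ S) ∧ (i ∉ y → y ∈ S ∨ swapSet i j y ∈ S) := by
  constructor
  · intro hy
    obtain ⟨x, hx, rfl⟩ := mem_image.1 hy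
    rw [shiftFun_eq_ite]
    split_ifs with h
    · refine ⟨fun hi => absurd (mem_swapSet.1 hi) (by simpa using h.2.1), fun _ => ?_⟩
      exact Or.inr (by rwa [swapSet_swapSet])
    · refine ⟨fun hix => ⟨hx, ?_⟩, fun _ => Or.inl hx⟩
      by_cases hjx : j ∈ x
      · rwa [swapSet_eq_self (iff_of_true hix hjx)]
      · by_contra hτx
        exact h ⟨hix, hjx, hτx⟩
  · rintro ⟨hmem, hnmem⟩
    by_cases hiy : i ∈ y
    · obtain ⟨hyS, hτyS⟩ := hmem hiy
      refine mem_image.2 ⟨y, hyS, ?_⟩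
      rw [shiftFun_eq_ite, if_neg fun h => h.2.2 hτyS]
    by_cases hyS : y ∈ S
    · refine mem_image.2 ⟨y, hyS, ?_⟩
      rw [shiftFun_eq_ite, if_neg fun h => hiy h.1]
    have hτyS := (hnmem hiy).resolve_left hyS
    have hjy : j ∈ y := by
      by_contra hjy
      rw [swapSet_eq_self (iff_of_false hiy hjy)] at hτyS
      exact hyS hτyS
    refine mem_image.2 ⟨swapSet i j y, hτyS, ?_⟩
    have hcond : i ∈ swapSet i j y ∧ j ∉ swapSet i j y ∧ swapSet i j (swapSet i j y) ∉ S := by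
      simp [hjy, hiy, hyS]
    rw [shiftFun_eq_ite, if_pos hcond, swapSet_swapSet]

theorem mem_or_swapSet_mem_of_mem_shift {z : Finset ℕ} (hz : z ∈ shift i j S) :
    z ∈ S ∨ swapSet i j z ∈ S := by
  by_cases hiz : i ∈ z
  · exact Or.inl ((mem_shift.1 hz).1 hiz).1
  · exact (mem_shift.1 hz).2 hiz

theorem mem_and_swapSet_mem_or_of_mem_shift {z : Finset ℕ} (hz : z ∈ shift i j S) :
    (z ∈ S ∧ swapSet i j z ∈ S) ∨ (i ∉ z ∧ j ∈ z ∧ (z ∈ S ∨ swapSet i j z ∈ S)) := by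
  by_cases hiz : i ∈ z
  · exact Or.inl ((mem_shift.1 hz).1 hiz)
  by_cases hjz : j ∈ z
  · exact Or.inr ⟨hiz, hjz, (mem_shift.1 hz).2 hiz⟩
  · have hz' := (mem_shift.1 hz).2 hiz
    rw [swapSet_eq_self (iff_of_false hiz hjz), or_self] at hz' ⊢
    exact Or.inl ⟨hz', hz'⟩

end Shift

section Ball

variable {n m i j : ℕ} {S : Finset (Finset ℕ)} {y : Finset ℕ}

theorem mem_ball :
    y ∈ ball n m S ↔ y ∈ S ∨ y ∈ johnsonVerts n m ∧ ∃ x ∈ S, (symmDiff x y).card = 2 := by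
  simp only [ball, boundary, mem_union, mem_filter]
  tauto

theorem subset_ball : S ⊆ ball n m S :=
  subset_union_left

theorem mem_ball_of_adj {x : Finset ℕ} (hy : y ∈ johnsonVerts n m) (hx : x ∈ S)
    (hxy : (symmDiff x y).card = 2) : y ∈ ball n m S :=
  mem_ball.2 (Or.inr ⟨hy, x, hx, hxy⟩)

theorem swapSet_mem_ball_of_adj {x : Finset ℕ} (hi : i < n) (hj : j < n)
    (hy : y ∈ johnsonVerts n m) (hx : swapSet i j x ∈ S) (hxy : (symmDiff x y).card = 2) :
    swapSet i j y ∈ ball n m S :=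
  mem_ball_of_adj (swapSet_mem_johnsonVerts hi hj hy) hx (by rwa [card_symmDiff_swapSet])

theorem mem_ball_or_swapSet_mem_ball (hi : i < n) (hj : j < n)
    (hy : y ∈ ball n m (shift i j S)) : y ∈ ball n m S ∨ swapSet i j y ∈ ball n m S := by
  rcases mem_ball.1 hy with hyT | ⟨hyV, z, hzT, hzy⟩
  · exact (mem_or_swapSet_mem_of_mem_shift hyT).imp (subset_ball ·) (subset_ball ·)
  · exact (mem_or_swapSet_mem_of_mem_shift hzT).imp (mem_ball_of_adj hyV · hzy)
      (swapSet_mem_ball_of_adj hi hj hyV · hzy)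

theorem mem_ball_and_swapSet_mem_ball (hi : i < n) (hj : j < n) (hiy : i ∈ y)
    (hy : y ∈ ball n m (shift i j S)) : y ∈ ball n m S ∧ swapSet i j y ∈ ball n m S := by
  by_cases hjy : j ∈ y
  · simpa [swapSet_eq_self (iff_of_true hiy hjy)] using mem_ball_or_swapSet_mem_ball hi hj hy
  rcases mem_ball.1 hy with hyT | ⟨hyV, z, hzT, hzy⟩
  · exact ((mem_shift.1 hyT).1 hiy).imp (subset_ball ·) (subset_ball ·)
  rcases mem_and_swapSet_mem_or_of_mem_shift hzT with ⟨hzS, hτzS⟩ | ⟨hiz, hjz, hz⟩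
  · exact ⟨mem_ball_of_adj hyV hzS hzy, swapSet_mem_ball_of_adj hi hj hyV hτzS hzy⟩
  have hyτy := card_symmDiff_swapSet_self hiy hjy
  rw [eq_swapSet_of_card_symmDiff_eq_two hiy hjy hiz hjz (by rwa [symmDiff_comm]),
    swapSet_swapSet] at hz
  rcases hz with hτyS | hyS
  · exact ⟨mem_ball_of_adj hyV hτyS (by rwa [symmDiff_comm]), subset_ball hτyS⟩
  · exact ⟨subset_ball hyS, mem_ball_of_adj (swapSet_mem_johnsonVerts hi hj hyV) hyS hyτy⟩

theorem ball_shift_subset_shift_ball (hi : i < n) (hj : j < n) :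
    ball n m (shift i j S) ⊆ shift i j (ball n m S) := fun _ hy =>
  mem_shift.2 ⟨fun hiy => mem_ball_and_swapSet_mem_ball hi hj hiy hy,
    fun _ => mem_ball_or_swapSet_mem_ball hi hj hy⟩

theorem card_ball_shift_le (hi : i < n) (hj : j < n) :
    (ball n m (shift i j S)).card ≤ (ball n m S).card :=
  (card_le_card (ball_shift_subset_shift_ball hi hj)).trans_eq (card_shift i j _)

variable (n m S) in
theorem card_ball_eq_card_add_card_boundary :
    (ball n m S).card = S.card + (boundary n m S).card :=
  card_union_of_disjoint (disjoint_left.2 fun _ hy hb => (mem_filter.1 hb).2.1 hy)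

end Ball

theorem card_shift_and_card_ball_boundary_shift_le_general
    (n m i j : ℕ)
    (hi : i < n) (hj : j < n)
    (S : Finset (Finset ℕ)) :
    (shift i j S).card = S.card ∧
      (ball n m (shift i j S)).card ≤ (ball n m S).card ∧
      (boundary n m (shift i j S)).card ≤ (boundary n m S).card := by
  have hcard := card_shift i j S
  have hball := card_ball_shift_le (m := m) (S := S) hi hj
  refine ⟨hcard, hball, ?_⟩
  rw [card_ball_eq_card_add_card_boundary, card_ball_eq_card_add_card_boundary, hcard] at hball
  exact Nat.le_of_add_le_add_left hball

/-- For `i ≠ j` in `[n]` and a family `S` of `m`-subsets of `[n]`,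
the shift `T_{ij}` preserves cardinality and does not increase the cardinality of
the ball nor of the boundary in `J(n,m)`. -/
theorem card_shift_and_card_ball_boundary_shift_le
    (n m i j : ℕ) (hm : 1 ≤ m) (hmn : m ≤ n)
    (hi : i < n) (hj : j < n) (hij : i ≠ j)
    (S : Finset (Finset ℕ)) (hS : S ⊆ johnsonVerts n m) :
    (shift i j S).card = S.card ∧
      (ball n m (shift i j S)).card ≤ (ball n m S).card ∧
      (boundary n m (shift i j S)).card ≤ (boundary n m S).card :=
  card_shift_and_card_ball_boundary_shift_le_general n m i j hi hj S
end

section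
/- For each n ≥ 3 and each 1 ≤ k ≤ C(n,2), the isoperimetric function of the Johnson graph J(n,2) satisfies μ_{n,2}(k) = f(k,n,2); in particular, the initial segment of length k in the colex order on 2-element subsets of [n] is an optimal set of J(n,2). -/
open Finset

/-!
A pair outside `S` is adjacent to a member of `S` exactly when it meets the point set `V = ⋃ S`
(meeting a member in two points would make it that member). Hence
`|∂S| = C(n,2) - |S| - C(n - |V|, 2)`, and since `|S| ≤ C(|V|, 2)`, a family of `k` pairs has the
least boundary as soon as it spans the least possible number `v` of points,
`C(v-1,2) < k ≤ C(v,2)`. The colex initial segment of length `k = C(k₀,2) + k₁` consists of the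
pairs inside `[k₀]` and the pairs `{c, k₀}` with `c < k₁`, so it spans exactly `v` points, and
expanding `C(n,2) - k - C(n-v,2)` gives `f(k,n,2)`.
-/

namespace Nat

theorem choose_two_succ (a : ℕ) : (a + 1).choose 2 = a.choose 2 + a := by
  rw [choose_succ_succ', choose_one_right, add_comm]

theorem choose_two_add (a b : ℕ) : (a + b).choose 2 = a.choose 2 + a * b + b.choose 2 := by
  induction b with
  | zero => simp
  | succ b ih => rw [← add_assoc, choose_two_succ, ih, choose_two_succ]; ring

theorem choose_two_add_lt_choose_two_add_iff {a b k₀ k₁ : ℕ} (hab : a < b) (hk : k₁ ≤ k₀) :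
    b.choose 2 + a < k₀.choose 2 + k₁ ↔ b < k₀ ∨ b = k₀ ∧ a < k₁ := by
  rcases lt_trichotomy b k₀ with h | rfl | h
  · have : (b + 1).choose 2 ≤ k₀.choose 2 := choose_le_choose 2 h
    have := choose_two_succ b
    omega
  · omega
  · have : (k₀ + 1).choose 2 ≤ b.choose 2 := choose_le_choose 2 h
    have := choose_two_succ k₀
    omega

end Nat

theorem Finset.exists_lt_eq_pair_of_card_eq_two {α : Type*} [LinearOrder α] {s : Finset α}
    (h : #s = 2) : ∃ a b, a < b ∧ s = {a, b} := by
  obtain ⟨a, b, hab, rfl⟩ := card_eq_two.1 h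
  rcases hab.lt_or_gt with h | h
  · exact ⟨a, b, h, rfl⟩
  · exact ⟨b, a, h, pair_comm a b⟩

theorem Finset.ext_of_card_eq_two {α : Type*} [LinearOrder α] {𝒜 ℬ : Finset (Finset α)}
    (h𝒜 : ∀ s ∈ 𝒜, #s = 2) (hℬ : ∀ s ∈ ℬ, #s = 2)
    (h : ∀ a b, a < b → ({a, b} ∈ 𝒜 ↔ {a, b} ∈ ℬ)) : 𝒜 = ℬ := by
  ext s
  constructor <;> intro hs
  · obtain ⟨a, b, hab, rfl⟩ := exists_lt_eq_pair_of_card_eq_two (h𝒜 s hs)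
    exact (h a b hab).1 hs
  · obtain ⟨a, b, hab, rfl⟩ := exists_lt_eq_pair_of_card_eq_two (hℬ s hs)
    exact (h a b hab).2 hs

theorem Finset.card_symmDiff_add_two_mul_card_inter {α : Type*} [DecidableEq α]
    (s t : Finset α) : #(symmDiff s t) + 2 * #(s ∩ t) = #s + #t := by
  rw [symmDiff_def, sup_eq_union, card_union_of_disjoint disjoint_sdiff_sdiff]
  have := card_sdiff_add_card_inter s t
  have := card_sdiff_add_card_inter t s
  rw [inter_comm t s] at this
  omega

theorem Finset.card_symmDiff_eq_two_iff_not_disjoint {α : Type*} [DecidableEq α] {s t : Finset α}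
    (hs : #s = 2) (ht : #t = 2) (hst : s ≠ t) : #(symmDiff s t) = 2 ↔ ¬Disjoint s t := by
  have hsum := card_symmDiff_add_two_mul_card_inter s t
  have hinter : #(s ∩ t) < 2 := by
    refine lt_of_le_of_ne (hs ▸ card_le_card inter_subset_left) fun h2 => hst ?_
    have hs' : s ∩ t = s := eq_of_subset_of_card_le inter_subset_left (by omega)
    exact eq_of_subset_of_card_le (hs' ▸ inter_subset_right) (by omega)
  rw [disjoint_iff_inter_eq_empty, ← card_eq_zero]
  omega

theorem Finset.card_le_choose_card_sup_id {α : Type*} [DecidableEq α] {S : Finset (Finset α)}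
    {m : ℕ} (hS : (S : Set (Finset α)).Sized m) : #S ≤ (#(S.sup id)).choose m :=
  calc #S ≤ #((S.sup id).powersetCard m) :=
        card_le_card fun _ hs => mem_powersetCard.2 ⟨le_sup (f := id) hs, hS hs⟩
    _ = (#(S.sup id)).choose m := card_powersetCard _ _

theorem pair_mem_johnsonVerts_two_iff {n a b : ℕ} (hab : a < b) :
    ({a, b} : Finset ℕ) ∈ johnsonVerts n 2 ↔ b < n := by
  simp only [johnsonVerts, mem_powersetCard, insert_subset_iff, singleton_subset_iff, mem_range,
    card_pair hab.ne, and_true]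
  omega

theorem card_eq_of_mem_johnsonVerts {n m : ℕ} {s : Finset ℕ} (hs : s ∈ johnsonVerts n m) :
    #s = m :=
  (mem_powersetCard.1 hs).2

theorem card_johnsonVerts (n m : ℕ) : #(johnsonVerts n m) = n.choose m := by
  rw [johnsonVerts, card_powersetCard, card_range]

theorem mu_eq_card_boundary {n m : ℕ} {S : Finset (Finset ℕ)} (hS : S ⊆ johnsonVerts n m)
    (hmin : ∀ T ⊆ johnsonVerts n m, #T = #S → #(boundary n m S) ≤ #(boundary n m T)) :
    mu n m #S = #(boundary n m S) :=
  le_antisymm (Nat.sInf_le ⟨S, hS, rfl, rfl⟩)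
    (le_csInf ⟨_, S, hS, rfl, rfl⟩ fun _ ⟨T, hT, hTS, hb⟩ => hb ▸ hmin T hT hTS)

section JohnsonTwo

variable {n v : ℕ} {S T : Finset (Finset ℕ)}

theorem boundary_two_eq (hS : S ⊆ johnsonVerts n 2) :
    boundary n 2 S = {e ∈ johnsonVerts n 2 | ¬Disjoint e (S.sup id)} \ S := by
  have adj_iff {x e : Finset ℕ} (hx : x ∈ S) (he : e ∈ johnsonVerts n 2) (heS : e ∉ S) :
      #(symmDiff x e) = 2 ↔ ¬Disjoint e x := by
    rw [disjoint_comm]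
    exact card_symmDiff_eq_two_iff_not_disjoint (card_eq_of_mem_johnsonVerts (hS hx))
      (card_eq_of_mem_johnsonVerts he) (ne_of_mem_of_not_mem hx heS)
  ext e
  simp only [boundary, mem_sdiff, mem_filter, Finset.disjoint_sup_right, id, not_forall,
    exists_prop]
  exact ⟨fun ⟨he, heS, x, hx, hxe⟩ => ⟨⟨he, x, hx, (adj_iff hx he heS).1 hxe⟩, heS⟩,
    fun ⟨⟨he, x, hx, hxe⟩, heS⟩ => ⟨he, heS, x, hx, (adj_iff hx he heS).2 hxe⟩⟩

theorem card_boundary_two_add (hS : S ⊆ johnsonVerts n 2) :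
    #(boundary n 2 S) + #S + (n - #(S.sup id)).choose 2 = n.choose 2 := by
  set V := S.sup id
  have hVn : V ⊆ range n := Finset.sup_le fun s hs => (mem_powersetCard.1 (hS hs)).1
  have hSmeet : S ⊆ {e ∈ johnsonVerts n 2 | ¬Disjoint e V} := fun s hs =>
    mem_filter.2 ⟨hS hs, fun h => by
      have hs0 : s = ∅ := disjoint_self.1 (h.mono_right (le_sup (f := id) hs))
      simpa [hs0] using card_eq_of_mem_johnsonVerts (hS hs)⟩
  have hmiss : {e ∈ johnsonVerts n 2 | Disjoint e V} = (range n \ V).powersetCard 2 := by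
    ext e
    simp only [johnsonVerts, mem_filter, mem_powersetCard, subset_sdiff]
    tauto
  have hsplit := card_filter_add_card_filter_not (s := johnsonVerts n 2) (fun e => Disjoint e V)
  rw [hmiss, card_powersetCard, card_sdiff_of_subset hVn, card_range, card_johnsonVerts] at hsplit
  rw [boundary_two_eq hS, card_sdiff_of_subset hSmeet]
  have := card_le_card hSmeet
  omega

theorem le_card_sup_id (hS : S ⊆ johnsonVerts n 2) (hv : (v - 1).choose 2 < #S) :
    v ≤ #(S.sup id) := by
  by_contra! h
  have := card_le_choose_card_sup_id fun _ hs => card_eq_of_mem_johnsonVerts (hS hs)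
  have := Nat.choose_le_choose 2 (show #(S.sup id) ≤ v - 1 by omega)
  omega

theorem card_sup_id_eq (hS : S ⊆ johnsonVerts n 2) (hV : S.sup id ⊆ range v)
    (hv : (v - 1).choose 2 < #S) : #(S.sup id) = v :=
  le_antisymm (card_range v ▸ card_le_card hV) (le_card_sup_id hS hv)

theorem card_boundary_two_le (hS : S ⊆ johnsonVerts n 2) (hT : T ⊆ johnsonVerts n 2)
    (hST : #S = #T) (hV : #(S.sup id) ≤ #(T.sup id)) :
    #(boundary n 2 S) ≤ #(boundary n 2 T) := by
  have := card_boundary_two_add hS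
  have := card_boundary_two_add hT
  have := Nat.choose_le_choose 2 (show n - #(T.sup id) ≤ n - #(S.sup id) by omega)
  omega

theorem mu_two_eq_card_boundary (hS : S ⊆ johnsonVerts n 2) (hV : S.sup id ⊆ range v)
    (hv : (v - 1).choose 2 < #S) : mu n 2 #S = #(boundary n 2 S) :=
  mu_eq_card_boundary hS fun _ hT hTS => card_boundary_two_le hS hT hTS.symm <|
    (card_sup_id_eq hS hV hv).trans_le (le_card_sup_id hT (hTS ▸ hv))

end JohnsonTwo

theorem toColex_pair_lt_toColex_pair_iff {a b c d : ℕ} (hab : a < b) (hcd : c < d) :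
    toColex ({c, d} : Finset ℕ) < toColex {a, b} ↔ d < b ∨ d = b ∧ c < a := by
  rw [Finset.Colex.toColex_lt_toColex_iff_exists_forall_lt]
  simp only [mem_insert, mem_singleton, exists_eq_or_imp, exists_eq_left, forall_eq_or_imp,
    forall_eq, not_or]
  omega

def colexPairSeg (k₀ k₁ : ℕ) : Finset (Finset ℕ) :=
  (range k₀).powersetCard 2 ∪ (range k₁).image fun c => {c, k₀}

section ColexPairSeg

variable {a b k₀ k₁ : ℕ}

theorem pair_mem_colexPairSeg_iff (hab : a < b) (hk : k₁ ≤ k₀) :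
    {a, b} ∈ colexPairSeg k₀ k₁ ↔ b < k₀ ∨ b = k₀ ∧ a < k₁ := by
  simp only [colexPairSeg, mem_union, mem_powersetCard, insert_subset_iff, singleton_subset_iff,
    mem_range, card_pair hab.ne, and_true, mem_image]
  constructor
  · rintro (⟨-, hb⟩ | ⟨c, hc, hcab⟩)
    · exact Or.inl hb
    · have ha : a ∈ ({c, k₀} : Finset ℕ) := by rw [hcab]; simp
      have hb : b ∈ ({c, k₀} : Finset ℕ) := by rw [hcab]; simp
      simp only [mem_insert, mem_singleton] at ha hb
      omega
  · rintro (hb | ⟨rfl, ha⟩)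
    · exact Or.inl ⟨by omega, hb⟩
    · exact Or.inr ⟨a, ha, rfl⟩

theorem card_eq_two_of_mem_colexPairSeg (hk : k₁ ≤ k₀) {s : Finset ℕ}
    (hs : s ∈ colexPairSeg k₀ k₁) : #s = 2 := by
  rcases mem_union.1 hs with hs | hs
  · exact (mem_powersetCard.1 hs).2
  · obtain ⟨c, hc, rfl⟩ := mem_image.1 hs
    exact card_pair ((mem_range.1 hc).trans_le hk).ne

theorem card_colexPairSeg (hk : k₁ ≤ k₀) : #(colexPairSeg k₀ k₁) = k₀.choose 2 + k₁ := by
  have hdisj : Disjoint ((range k₀).powersetCard 2) ((range k₁).image fun c => {c, k₀}) := by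
    refine disjoint_left.2 fun s hs hs' => ?_
    obtain ⟨c, -, rfl⟩ := mem_image.1 hs'
    simpa using (mem_powersetCard.1 hs).1 (mem_insert_of_mem (mem_singleton_self k₀))
  have hinj : Set.InjOn (fun c => ({c, k₀} : Finset ℕ)) (range k₁) := fun c hc _ _ h =>
    (insert_inj (mem_singleton.not.2 ((mem_range.1 hc).trans_le hk).ne)).1 h
  rw [colexPairSeg, card_union_of_disjoint hdisj, card_powersetCard, card_image_of_injOn hinj,
    card_range, card_range]

end ColexPairSeg

section ColexInitSeg

variable {n k v a b : ℕ}

theorem filter_toColex_lt_pair_eq (hab : a < b) (hbn : b < n) :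
    {t ∈ johnsonVerts n 2 | toColex t < toColex {a, b}} = colexPairSeg b a := by
  refine ext_of_card_eq_two (fun s hs => card_eq_of_mem_johnsonVerts (mem_filter.1 hs).1)
    (fun _ => card_eq_two_of_mem_colexPairSeg hab.le) fun c d hcd => ?_
  rw [mem_filter, pair_mem_johnsonVerts_two_iff hcd, toColex_pair_lt_toColex_pair_iff hab hcd,
    pair_mem_colexPairSeg_iff hcd hab.le]
  omega

theorem pair_mem_colexInitSeg_two_iff (hab : a < b) :
    {a, b} ∈ colexInitSeg n 2 k ↔ b < n ∧ b.choose 2 + a < k := by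
  rw [colexInitSeg, mem_filter, pair_mem_johnsonVerts_two_iff hab]
  refine and_congr_right fun hbn => ?_
  rw [filter_toColex_lt_pair_eq hab hbn, card_colexPairSeg hab.le]

theorem colexInitSeg_two_choose_add {k₀ k₁ : ℕ} (hk : k₁ ≤ k₀)
    (hkn : k₀.choose 2 + k₁ ≤ n.choose 2) :
    colexInitSeg n 2 (k₀.choose 2 + k₁) = colexPairSeg k₀ k₁ := by
  refine ext_of_card_eq_two (fun s hs => card_eq_of_mem_johnsonVerts (mem_filter.1 hs).1)
    (fun _ => card_eq_two_of_mem_colexPairSeg hk) fun a b hab => ?_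
  rw [pair_mem_colexInitSeg_two_iff hab, pair_mem_colexPairSeg_iff hab hk,
    ← Nat.choose_two_add_lt_choose_two_add_iff hab hk]
  refine ⟨And.right, fun h => ⟨?_, h⟩⟩
  have := (Nat.choose_two_add_lt_choose_two_add_iff hab (Nat.zero_le n)).1 (by omega)
  omega

theorem card_colexInitSeg_two (hkn : k ≤ n.choose 2) (hv : (v - 1).choose 2 ≤ k)
    (hkv : k ≤ v.choose 2) : #(colexInitSeg n 2 k) = k := by
  have hsucc : v.choose 2 = (v - 1).choose 2 + (v - 1) := by
    rcases v with _ | v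
    · rfl
    · exact Nat.choose_two_succ v
  obtain ⟨k₁, rfl⟩ := Nat.exists_eq_add_of_le hv
  rw [colexInitSeg_two_choose_add (by omega) hkn, card_colexPairSeg (by omega)]

theorem sup_id_colexInitSeg_two_subset (hkv : k ≤ v.choose 2) :
    (colexInitSeg n 2 k).sup id ⊆ range v := by
  refine Finset.sup_le fun s hs => ?_
  obtain ⟨a, b, hab, rfl⟩ :=
    exists_lt_eq_pair_of_card_eq_two (card_eq_of_mem_johnsonVerts (mem_filter.1 hs).1)
  have hrank := ((pair_mem_colexInitSeg_two_iff hab).1 hs).2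
  have := (Nat.choose_two_add_lt_choose_two_add_iff hab (Nat.zero_le v)).1 (by omega)
  simp only [id, insert_subset_iff, singleton_subset_iff, mem_range]
  omega

end ColexInitSeg

theorem IsMBinomialRep.two_cases {k r : ℕ} {ks : ℕ → ℕ} (h : IsMBinomialRep 2 k r ks) :
    r = 0 ∧ 2 ≤ ks 0 ∧ k = (ks 0).choose 2 ∨
      r = 1 ∧ 1 ≤ ks 1 ∧ ks 1 < ks 0 ∧ k = (ks 0).choose 2 + ks 1 := by
  obtain ⟨hdec, hlast, hr, rfl⟩ := h
  interval_cases r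
  · simpa using hlast
  · simpa [Finset.sum_range_succ] using ⟨hlast, hdec 0 one_pos⟩

theorem fVal_two_zero (n : ℕ) (ks : ℕ → ℕ) : fVal n 2 0 ks = ks 0 * ((n : ℤ) - ks 0) := by
  simp [fVal]

theorem fVal_two_one (n : ℕ) (ks : ℕ → ℕ) :
    fVal n 2 1 ks = ks 0 * ((n : ℤ) - ks 0) + ((n : ℤ) - ks 0 - 1 - ks 1) := by
  simp [fVal]

theorem IsMBinomialRep.exists_fVal_two_eq {n k r : ℕ} {ks : ℕ → ℕ}
    (hrep : IsMBinomialRep 2 k r ks) (hkn : k ≤ n.choose 2) :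
    ∃ v, (v - 1).choose 2 < k ∧ k ≤ v.choose 2 ∧
      fVal n 2 r ks + k + (n - v).choose 2 = n.choose 2 := by
  have hvn {v : ℕ} (hv : (v - 1).choose 2 < k) : ∃ d, n = v + d := by
    have := (Nat.choose_mono 2).reflect_lt (hv.trans_le hkn)
    exact Nat.exists_eq_add_of_le (by omega)
  rcases hrep.two_cases with ⟨rfl, hk₀, rfl⟩ | ⟨rfl, hk₁, hk₁₀, rfl⟩
  · have hv : (ks 0 - 1).choose 2 < (ks 0).choose 2 := by
      have := Nat.choose_two_succ (ks 0 - 1)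
      rw [Nat.sub_add_cancel (by omega)] at this
      omega
    obtain ⟨d, rfl⟩ := hvn hv
    refine ⟨ks 0, hv, le_rfl, ?_⟩
    rw [Nat.choose_two_add, add_tsub_cancel_left, fVal_two_zero]
    push_cast
    ring
  · have hv : (ks 0 + 1 - 1).choose 2 < (ks 0).choose 2 + ks 1 := by
      simp only [add_tsub_cancel_right]
      omega
    obtain ⟨d, rfl⟩ := hvn hv
    refine ⟨ks 0 + 1, hv, by rw [Nat.choose_two_succ]; omega, ?_⟩
    rw [Nat.choose_two_add, Nat.choose_two_succ, add_tsub_cancel_left, fVal_two_one]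
    push_cast
    ring

theorem mu_eq_fVal_johnson_two_general
    (n k r : ℕ) (ks : ℕ → ℕ)
    (hkn : k ≤ n.choose 2)
    (hrep : IsMBinomialRep 2 k r ks) :
    (mu n 2 k : ℤ) = fVal n 2 r ks ∧
      (boundary n 2 (colexInitSeg n 2 k)).card =
        mu n 2 (colexInitSeg n 2 k).card := by
  obtain ⟨v, hv, hkv, hf⟩ := hrep.exists_fVal_two_eq hkn
  set S := colexInitSeg n 2 k
  have hS : S ⊆ johnsonVerts n 2 := filter_subset _ _
  have hV : S.sup id ⊆ range v := sup_id_colexInitSeg_two_subset hkv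
  have hcard : #S = k := card_colexInitSeg_two hkn hv.le hkv
  rw [← hcard] at hv hf ⊢
  have hmu := mu_two_eq_card_boundary hS hV hv
  have hsum := card_boundary_two_add hS
  rw [card_sup_id_eq hS hV hv, ← hmu] at hsum
  exact ⟨by omega, hmu.symm⟩

/-- For `n ≥ 3` and `1 ≤ k ≤ C(n,2)`, the isoperimetric function
of `J(n,2)` satisfies `μ_{n,2}(k) = f(k,n,2)` (where `k = ∑_{i=0}^{r} C(ks i, 2-i)`
is the `2`-binomial representation of `k`); in particular the initial segment of
length `k` in the colex order is an optimal set of `J(n,2)`. -/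
theorem mu_eq_fVal_johnson_two
    (n k r : ℕ) (ks : ℕ → ℕ)
    (hn : 3 ≤ n) (hk : 1 ≤ k) (hkn : k ≤ n.choose 2)
    (hrep : IsMBinomialRep 2 k r ks) :
    (mu n 2 k : ℤ) = fVal n 2 r ks ∧
      (boundary n 2 (colexInitSeg n 2 k)).card =
        mu n 2 (colexInitSeg n 2 k).card :=
  mu_eq_fVal_johnson_two_general n k r ks hkn hrep
end

section
/- Let 1 ≤ m < n and let S be a compressed family of m-element subsets of [n], viewed as vertices of the Johnson graph J(n,m). Let S₀ = {x ∈ S : n ∉ x}. Then B(S) = B(S₀), where B denotes the ball in J(n,m), and moreover |B(S)| = |B'(S₀)| + |Δ(S₀)|, where B' denotes the ball in the Johnson graph J(n−1,m) (regarding S₀ as a family of m-subsets of [n−1]) and Δ(S₀) is the lower shadow of S₀. -/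
/-!
Compression pushes the largest element `n - 1` downwards. A member of `S` containing `n - 1`
is adjacent to one of its shifts, which lies in `S₀`; and a neighbour `x - a + b` of such a
member `x` is either itself a shift of `x` (when `a = n - 1`), hence in `S`, or a neighbour of
the shifted set `x - (n - 1) + b ∈ S₀`. For the count, split `B(S₀)` according to whether
`n - 1` is present: the vertices avoiding it form the ball of `S₀` in `J(n - 1, m)`, and those
containing it are exactly the sets `t ∪ {n - 1}` with `t` in the shadow of `S₀`.
-/

open Finset

open scoped symmDiff

section Adjacency

variable {α : Type*} [DecidableEq α] {x y : Finset α} {a b : α}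

lemma symmDiff_insert_erase (ha : a ∈ x) (hb : b ∉ x) :
    x ∆ insert b (x.erase a) = {a, b} := by
  ext c
  simp only [mem_symmDiff, mem_insert, mem_erase, mem_singleton]
  grind

lemma card_symmDiff_insert_erase (ha : a ∈ x) (hb : b ∉ x) :
    #(x ∆ insert b (x.erase a)) = 2 := by
  rw [symmDiff_insert_erase ha hb, card_pair (ne_of_mem_of_not_mem ha hb)]

lemma exists_eq_insert_erase_of_card_symmDiff_eq_two (hxy : #x = #y)
    (h : #(x ∆ y) = 2) : ∃ a ∈ x, ∃ b ∉ x, y = insert b (x.erase a) := by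
  rw [Finset.symmDiff_def, card_union_of_disjoint disjoint_sdiff_sdiff] at h
  have hcomm := card_sdiff_comm hxy
  obtain ⟨a, ha⟩ := card_eq_one.1 (show #(x \ y) = 1 by omega)
  obtain ⟨b, hb⟩ := card_eq_one.1 (show #(y \ x) = 1 by omega)
  have hax : a ∈ x \ y := ha ▸ mem_singleton_self a
  have hby : b ∈ y \ x := hb ▸ mem_singleton_self b
  refine ⟨a, (mem_sdiff.1 hax).1, b, (mem_sdiff.1 hby).2, ?_⟩
  rw [erase_eq, ← ha, sdiff_sdiff_right_self, insert_eq, ← hb, inf_eq_inter, inter_comm,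
    sdiff_union_inter]

end Adjacency

lemma mem_johnsonVerts {n m : ℕ} {x : Finset ℕ} :
    x ∈ johnsonVerts n m ↔ x ⊆ range n ∧ #x = m :=
  mem_powersetCard

lemma notMem_of_mem_johnsonVerts {p m : ℕ} {x : Finset ℕ} (hx : x ∈ johnsonVerts p m) :
    p ∉ x :=
  fun hp => (notMem_range_self (n := p)) (mem_johnsonVerts.1 hx |>.1 hp)

lemma mem_johnsonVerts_succ_and_notMem {p m : ℕ} {x : Finset ℕ} :
    x ∈ johnsonVerts (p + 1) m ∧ p ∉ x ↔ x ∈ johnsonVerts p m := by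
  simp only [mem_johnsonVerts, range_add_one]
  constructor
  · rintro ⟨⟨hsub, hcard⟩, hp⟩
    exact ⟨(subset_insert_iff_of_notMem hp).1 hsub, hcard⟩
  · intro hx
    have hp := notMem_of_mem_johnsonVerts (mem_johnsonVerts.2 hx)
    exact ⟨⟨hx.1.trans (subset_insert _ _), hx.2⟩, hp⟩

lemma insert_mem_johnsonVerts_succ {p k : ℕ} {t : Finset ℕ} (ht : t ∈ johnsonVerts p k) :
    insert p t ∈ johnsonVerts (p + 1) (k + 1) := by
  obtain ⟨hsub, hcard⟩ := mem_johnsonVerts.1 ht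
  rw [mem_johnsonVerts, range_add_one, card_insert_of_notMem (notMem_of_mem_johnsonVerts ht)]
  exact ⟨insert_subset_insert p hsub, by rw [hcard]⟩

lemma mem_ball_iff {n m : ℕ} {S : Finset (Finset ℕ)} {z : Finset ℕ} :
    z ∈ ball n m S ↔ z ∈ S ∨ z ∈ johnsonVerts n m ∧ ∃ x ∈ S, #(x ∆ z) = 2 := by
  by_cases hz : z ∈ S <;> simp [ball, boundary, hz]

lemma ball_mono {n m : ℕ} {S T : Finset (Finset ℕ)} (h : T ⊆ S) : ball n m T ⊆ ball n m S := by
  intro z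
  simp only [mem_ball_iff]
  rintro (hz | ⟨hzV, x, hx, hxz⟩)
  exacts [Or.inl (h hz), Or.inr ⟨hzV, x, h hx, hxz⟩]

lemma insert_erase_mem_of_shift_eq {i j : ℕ} {S : Finset (Finset ℕ)} (h : shift i j S = S)
    {x : Finset ℕ} (hx : x ∈ S) (hi : i ∈ x) (hj : j ∉ x) : insert j (x.erase i) ∈ S := by
  by_contra hnot
  have hmem : shiftFun i j S x ∈ shift i j S := mem_image_of_mem _ hx
  rw [h, shiftFun, if_pos ⟨hi, hj, hnot⟩] at hmem
  exact hnot hmem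

lemma exists_lt_notMem_of_mem_of_card_le {p : ℕ} {z : Finset ℕ} (hp : p ∈ z) (hz : #z ≤ p) :
    ∃ j < p, j ∉ z := by
  by_contra! h
  have hsub : range (p + 1) ⊆ z := by
    rw [range_add_one, insert_subset_iff]
    exact ⟨hp, fun j hj => h j (mem_range.1 hj)⟩
  have := card_le_card hsub
  rw [card_range] at this
  omega

lemma subset_ball_filter_notMem {p m : ℕ} (hmp : m ≤ p) {S : Finset (Finset ℕ)}
    (hS : S ⊆ johnsonVerts (p + 1) m) (hshift : ∀ j < p, shift p j S = S) :
    S ⊆ ball (p + 1) m (S.filter (p ∉ ·)) := by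
  intro z hz
  by_cases hpz : p ∈ z
  · obtain ⟨j, hjp, hjz⟩ :=
      exists_lt_notMem_of_mem_of_card_le hpz ((mem_johnsonVerts.1 (hS hz)).2 ▸ hmp)
    have hz' : insert j (z.erase p) ∈ S.filter (p ∉ ·) :=
      mem_filter.2 ⟨insert_erase_mem_of_shift_eq (hshift j hjp) hz hpz hjz, by simp [hjp.ne']⟩
    exact mem_ball_iff.2 (Or.inr ⟨hS hz, _, hz',
      symmDiff_comm z _ ▸ card_symmDiff_insert_erase hpz hjz⟩)
  · exact mem_ball_iff.2 (Or.inl (mem_filter.2 ⟨hz, hpz⟩))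

theorem ball_eq_ball_filter_notMem {p m : ℕ} (hmp : m ≤ p) {S : Finset (Finset ℕ)}
    (hS : S ⊆ johnsonVerts (p + 1) m) (hshift : ∀ j < p, shift p j S = S) :
    ball (p + 1) m S = ball (p + 1) m (S.filter (p ∉ ·)) := by
  have hS_ball := subset_ball_filter_notMem hmp hS hshift
  set S₀ := S.filter (p ∉ ·)
  refine (ball_mono (filter_subset _ S)).antisymm' fun z hz => ?_
  rcases mem_ball_iff.1 hz with hzS | ⟨hzV, x, hxS, hxz⟩
  · exact hS_ball hzS
  obtain ⟨a, hax, b, hbx, rfl⟩ := exists_eq_insert_erase_of_card_symmDiff_eq_two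
    ((mem_johnsonVerts.1 (hS hxS)).2.trans (mem_johnsonVerts.1 hzV).2.symm) hxz
  by_cases hpx : p ∈ x
  swap
  · exact mem_ball_iff.2 (Or.inr ⟨hzV, x, mem_filter.2 ⟨hxS, hpx⟩, hxz⟩)
  have hbp : b < p := by
    have := mem_range.1 ((mem_johnsonVerts.1 hzV).1 (mem_insert_self b _))
    have : p ≠ b := ne_of_mem_of_not_mem hpx hbx
    omega
  obtain rfl | hap := eq_or_ne a p
  · exact hS_ball (insert_erase_mem_of_shift_eq (hshift b hbp) hxS hax hbx)
  set x' := insert b (x.erase p)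
  have hpx' : p ∉ x' := by simp [x', hbp.ne']
  have hx' : x' ∈ S₀ :=
    mem_filter.2 ⟨insert_erase_mem_of_shift_eq (hshift b hbp) hxS hpx hbx, hpx'⟩
  have hz : insert b (x.erase a) = insert p (x'.erase a) := by
    ext c
    simp only [x', mem_insert, mem_erase]
    grind
  rw [hz] at hzV ⊢
  exact mem_ball_iff.2 (Or.inr ⟨hzV, x', hx',
    card_symmDiff_insert_erase (mem_insert_of_mem (mem_erase.2 ⟨hap, hax⟩)) hpx'⟩)

section Restriction

variable {p m : ℕ} {S : Finset (Finset ℕ)}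

lemma ball_succ_filter_notMem (hS : S ⊆ johnsonVerts p m) :
    (ball (p + 1) m S).filter (p ∉ ·) = ball p m S := by
  ext z
  have hSp : z ∈ S → p ∉ z := fun hz => notMem_of_mem_johnsonVerts (hS hz)
  simp only [mem_filter, mem_ball_iff]
  rw [← mem_johnsonVerts_succ_and_notMem (p := p)]
  tauto

lemma notMem_of_mem_lowShadow {t : Finset ℕ} (ht : t ∈ lowShadow p m S) : p ∉ t :=
  notMem_of_mem_johnsonVerts (mem_filter.1 ht).1

lemma ball_succ_filter_mem (hm : 1 ≤ m) (hS : S ⊆ johnsonVerts p m) :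
    (ball (p + 1) m S).filter (p ∈ ·) = (lowShadow p m S).image (insert p) := by
  ext z
  simp only [mem_filter, mem_image]
  constructor
  · rintro ⟨hz, hpz⟩
    rcases mem_ball_iff.1 hz with hzS | ⟨hzV, x, hxS, hxz⟩
    · exact absurd hpz (notMem_of_mem_johnsonVerts (hS hzS))
    obtain ⟨hxsub, hxcard⟩ := mem_johnsonVerts.1 (hS hxS)
    obtain ⟨a, hax, b, -, rfl⟩ := exists_eq_insert_erase_of_card_symmDiff_eq_two
      (hxcard.trans (mem_johnsonVerts.1 hzV).2.symm) hxz
    have hbp : b = p := by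
      rcases mem_insert.1 hpz with h | h
      · exact h.symm
      · exact absurd (mem_of_mem_erase h) (notMem_of_mem_johnsonVerts (hS hxS))
    refine ⟨x.erase a, mem_filter.2 ⟨mem_powersetCard.2 ⟨(erase_subset a x).trans hxsub, ?_⟩,
      x, hxS, erase_subset a x⟩, hbp ▸ rfl⟩
    rw [card_erase_of_mem hax, hxcard]
  · rintro ⟨t, ht, rfl⟩
    obtain ⟨htV, s, hsS, hts⟩ := mem_filter.1 ht
    obtain ⟨c, hct, rfl⟩ : ∃ c ∉ t, insert c t = s := by
      refine exists_eq_insert_iff.2 ⟨hts, ?_⟩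
      rw [(mem_johnsonVerts.1 htV).2, (mem_johnsonVerts.1 (hS hsS)).2]
      omega
    refine ⟨mem_ball_iff.2 (Or.inr ⟨?_, insert c t, hsS, ?_⟩), mem_insert_self p t⟩
    · exact Nat.sub_add_cancel hm ▸ insert_mem_johnsonVerts_succ htV
    · simpa only [erase_insert hct] using card_symmDiff_insert_erase (mem_insert_self c t)
        (notMem_of_mem_johnsonVerts (hS hsS))

theorem card_ball_succ (hm : 1 ≤ m) (hS : S ⊆ johnsonVerts p m) :
    #(ball (p + 1) m S) = #(ball p m S) + #(lowShadow p m S) := by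
  rw [← card_filter_add_card_filter_not (s := ball (p + 1) m S) (p ∉ ·)]
  simp only [not_not]
  rw [ball_succ_filter_notMem hS, ball_succ_filter_mem hm hS, card_image_of_injOn]
  intro t₁ h₁ t₂ h₂ h
  rw [← erase_insert (notMem_of_mem_lowShadow h₁), ← erase_insert (notMem_of_mem_lowShadow h₂)]
  exact congrArg (erase · p) h

end Restriction

/-- Let `1 ≤ m < n` and let `S` be a compressed family of
`m`-subsets of `[n]`, with `S₀` the members of `S` not containing the last
element of `[n]`. Then `B(S) = B(S₀)` in `J(n,m)` and
`|B(S)| = |B'(S₀)| + |Δ(S₀)|`, where `B'` is the ball in `J(n-1,m)`. -/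
theorem ball_compressed_section
    (n m : ℕ) (hm : 1 ≤ m) (hmn : m < n)
    (S : Finset (Finset ℕ)) (hS : S ⊆ johnsonVerts n m)
    (hcomp : ∀ i j : ℕ, j < i → i < n → shift i j S = S) :
    ball n m S = ball n m (S.filter fun x => (n - 1) ∉ x) ∧
      (ball n m S).card =
        (ball (n - 1) m (S.filter fun x => (n - 1) ∉ x)).card +
          (lowShadow (n - 1) m (S.filter fun x => (n - 1) ∉ x)).card := by
  obtain ⟨p, rfl⟩ : ∃ p, n = p + 1 := ⟨n - 1, by omega⟩
  simp only [Nat.add_sub_cancel]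
  have hball := ball_eq_ball_filter_notMem (by omega) hS fun j hj => hcomp p j hj p.lt_succ_self
  have hS₀ : S.filter (p ∉ ·) ⊆ johnsonVerts p m := fun x hx =>
    mem_johnsonVerts_succ_and_notMem.1 ⟨hS (mem_filter.1 hx).1, (mem_filter.1 hx).2⟩
  exact ⟨hball, hball ▸ card_ball_succ hm hS₀⟩
end
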